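/- arXiv:1307.6149 — 5 statements merged into one kernel-verified Lean document; each statement's English description precedes it below -/
import Mathlib

section
/- Let X₁, X₂ be i.i.d. nonnegative random variables with distribution function F of unbounded support. For any constant c ≥ 0, lim_{K→∞} limsup_{x→∞} P(max(X₁,X₂) > x - c and min(X₁,X₂) > K | X₁ + X₂ > x) = 0. -/
/-!
On the event, one summand exceeds `x - c` and the other exceeds `K`, so its probability is at
most `2 F̄(x - c) F̄(K)`. On the other hand `X₁ > x - c, X₂ > c` forces `X₁ + X₂ > x`, so
`P(X₁ + X₂ > x) ≥ F̄(x - c) F̄(c)`. Hence the conditional probability is at most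
`2 F̄(K) / F̄(c)` uniformly in `x`, and this bound tends to `0` as `K → ∞`.
-/

open MeasureTheory Filter Set

/-- Tail of a distribution: `F̄(x) = P(X > x)`. -/
noncomputable def tail (μ : Measure ℝ) (x : ℝ) : ℝ := (μ (Set.Ioi x)).toReal

/-- Conditional probability `P(A | X₁ + X₂ > x)` for two i.i.d. variables with law `μ`. -/
noncomputable def condPair (μ : Measure ℝ) (A : Set (ℝ × ℝ)) (x : ℝ) : ℝ :=
  ((μ.prod μ) (A ∩ {p | x < p.1 + p.2})).toReal / ((μ.prod μ) {p | x < p.1 + p.2}).toReal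

lemma tendsto_tail_atTop (μ : Measure ℝ) [IsFiniteMeasure μ] :
    Tendsto (tail μ) atTop (nhds 0) := by
  have hInter : ⋂ K : ℝ, Ioi K = ∅ :=
    eq_empty_of_forall_notMem fun y hy => lt_irrefl y (mem_iInter.1 hy y)
  have h := tendsto_measure_iInter_atTop (μ := μ) (fun K => measurableSet_Ioi.nullMeasurableSet)
    (fun _ _ hKL => Ioi_subset_Ioi hKL) ⟨0, measure_ne_top μ _⟩
  rw [hInter, measure_empty] at h
  exact (ENNReal.tendsto_toReal ENNReal.zero_ne_top).comp h

section ProductBounds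

variable (μ : Measure ℝ) [SFinite μ]

lemma prod_lt_max_lt_min_le (a K : ℝ) :
    (μ.prod μ) {p | a < max p.1 p.2 ∧ K < min p.1 p.2} ≤ 2 * (μ (Ioi a) * μ (Ioi K)) := by
  have hsub : {p : ℝ × ℝ | a < max p.1 p.2 ∧ K < min p.1 p.2}
      ⊆ (Ioi a ×ˢ Ioi K) ∪ (Ioi K ×ˢ Ioi a) := by
    rintro ⟨p₁, p₂⟩ ⟨hmax, hmin⟩
    rcases max_cases p₁ p₂ with ⟨hm, -⟩ | ⟨hm, -⟩ <;> rw [hm] at hmax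
    · exact .inl ⟨hmax, hmin.trans_le (min_le_right _ _)⟩
    · exact .inr ⟨hmin.trans_le (min_le_left _ _), hmax⟩
  calc (μ.prod μ) {p | a < max p.1 p.2 ∧ K < min p.1 p.2}
      ≤ (μ.prod μ) (Ioi a ×ˢ Ioi K) + (μ.prod μ) (Ioi K ×ˢ Ioi a) :=
        (measure_mono hsub).trans (measure_union_le _ _)
    _ = 2 * (μ (Ioi a) * μ (Ioi K)) := by rw [Measure.prod_prod, Measure.prod_prod]; ring

lemma measure_Ioi_mul_le_prod_lt_add (x c : ℝ) :
    μ (Ioi (x - c)) * μ (Ioi c) ≤ (μ.prod μ) {p | x < p.1 + p.2} := by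
  rw [← Measure.prod_prod]
  refine measure_mono ?_
  rintro ⟨p₁, p₂⟩ ⟨h₁, h₂⟩
  simp only [mem_Ioi, mem_ofPred_eq] at *
  linarith

end ProductBounds

lemma condPair_nonneg (μ : Measure ℝ) (A : Set (ℝ × ℝ)) (x : ℝ) : 0 ≤ condPair μ A x :=
  div_nonneg ENNReal.toReal_nonneg ENNReal.toReal_nonneg

lemma condPair_max_min_le (μ : Measure ℝ) [IsFiniteMeasure μ]
    (hub : ∀ x : ℝ, 0 < μ (Ioi x)) (c K x : ℝ) :
    condPair μ {p | x - c < max p.1 p.2 ∧ K < min p.1 p.2} x ≤ 2 * tail μ K / tail μ c := by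
  have htail_pos (y : ℝ) : 0 < tail μ y := ENNReal.toReal_pos (hub y).ne' (measure_ne_top μ _)
  have hnum : ((μ.prod μ) ({p | x - c < max p.1 p.2 ∧ K < min p.1 p.2}
      ∩ {p | x < p.1 + p.2})).toReal ≤ 2 * tail μ (x - c) * tail μ K := by
    have h := ENNReal.toReal_mono (by finiteness)
      ((measure_mono (inter_subset_left (t := {p | x < p.1 + p.2}))).trans
        (prod_lt_max_lt_min_le μ (x - c) K))
    rwa [ENNReal.toReal_mul, ENNReal.toReal_mul, ENNReal.toReal_ofNat, ← mul_assoc] at h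
  have hden : tail μ (x - c) * tail μ c ≤ ((μ.prod μ) {p | x < p.1 + p.2}).toReal := by
    have h := ENNReal.toReal_mono (measure_ne_top _ _) (measure_Ioi_mul_le_prod_lt_add μ x c)
    rwa [ENNReal.toReal_mul] at h
  have hxc := htail_pos (x - c)
  have hK := htail_pos K
  calc condPair μ {p | x - c < max p.1 p.2 ∧ K < min p.1 p.2} x
      ≤ 2 * tail μ (x - c) * tail μ K / (tail μ (x - c) * tail μ c) :=
        div_le_div₀ (by positivity) hnum (mul_pos hxc (htail_pos c)) hden
    _ = 2 * tail μ K / tail μ c := by field_simp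

theorem stmt0_general (μ : Measure ℝ) [IsProbabilityMeasure μ]
    (hub : ∀ x : ℝ, 0 < μ (Set.Ioi x))
    (c : ℝ) :
    Tendsto (fun K : ℝ => limsup (fun x : ℝ =>
        condPair μ {p | x - c < max p.1 p.2 ∧ K < min p.1 p.2} x) atTop)
      atTop (nhds 0) := by
  have hbound : Tendsto (fun K => 2 * tail μ K / tail μ c) atTop (nhds 0) := by
    simpa using ((tendsto_tail_atTop μ).const_mul 2).div_const (tail μ c)
  refine tendsto_of_tendsto_of_tendsto_of_le_of_le tendsto_const_nhds hbound
    (fun K => ?_) fun K => ?_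
  · exact le_limsup_of_frequently_le (.of_forall fun x => condPair_nonneg μ _ x)
      ⟨_, eventually_map.2 (.of_forall (condPair_max_min_le μ hub c K))⟩
  · exact limsup_le_of_le (isCoboundedUnder_le_of_le atTop fun x => condPair_nonneg μ _ x)
      (.of_forall (condPair_max_min_le μ hub c K))

theorem stmt0 (μ : Measure ℝ) [IsProbabilityMeasure μ]
    (hnn : μ (Set.Iio 0) = 0) (hub : ∀ x : ℝ, 0 < μ (Set.Ioi x))
    (c : ℝ) (hc : 0 ≤ c) :
    Tendsto (fun K : ℝ => limsup (fun x : ℝ =>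
        condPair μ {p | x - c < max p.1 p.2 ∧ K < min p.1 p.2} x) atTop)
      atTop (nhds 0) :=
  stmt0_general μ hub c
end

section
/- For F ∈ 𝓕 and i.i.d. nonnegative X₁,...,Xₙ with distribution F, the condition lim_{K→∞} liminf_{x→∞} P(X_{2,n} ≤ K | Sₙ > x) = 1 is equivalent to lim_{K→∞} inf_{x≥0} P(X_{2,n} ≤ K | Sₙ > x) = 1, where X_{2,n} is the second largest of X₁,...,Xₙ and Sₙ = X₁ + ⋯ + Xₙ. -/
/-!
On `Sₙ > x` with `x ≤ x₀` one divides by at least `P(Sₙ > x₀) > 0` (unbounded support), so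
`P(X_{2,n} > K | Sₙ > x) ≤ P(X_{2,n} > K) / P(Sₙ > x₀) → 0` uniformly in `x ≤ x₀` as `K → ∞`.
Given the liminf condition and `b < 1`, pick `K₀`, `x₀` with `P(X_{2,n} ≤ K₀ | Sₙ > x) > b` for `x ≥ x₀`;
monotonicity in `K` keeps this for `K ≥ K₀`, and the uniform bound covers `x ≤ x₀`, so the infimum
over all `x` exceeds `b` for large `K`. The converse holds because the infimum bounds the liminf.
-/

open MeasureTheory Filter Set

/-- `P` under the law of `n` i.i.d. copies with common law `μ`. -/
noncomputable def piP (μ : Measure ℝ) (n : ℕ) (A : Set (Fin n → ℝ)) : ℝ :=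
  ((Measure.pi fun _ : Fin n => μ) A).toReal

/-- The event `Sₙ > x`. -/
def SumGt {n : ℕ} (x : ℝ) (v : Fin n → ℝ) : Prop := x < ∑ i, v i

/-- The event that the second largest of `v 0, …, v (n-1)` is `≤ K`. -/
def SecondLe {n : ℕ} (K : ℝ) (v : Fin n → ℝ) : Prop :=
  ∀ i j : Fin n, i ≠ j → v i ≤ K ∨ v j ≤ K

/-- Conditional probability `P(A | Sₙ > x)`. -/
noncomputable def condN (μ : Measure ℝ) (n : ℕ) (A : Set (Fin n → ℝ)) (x : ℝ) : ℝ :=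
  piP μ n (A ∩ {v | SumGt x v}) / piP μ n {v | SumGt x v}

open scoped Topology

section LiminfInf

variable {g : ℝ → ℝ → ℝ}

lemma tendsto_nhds_one_iff_forall_lt_of_le_one {F : ℝ → ℝ} (hF : ∀ K, F K ≤ 1) :
    Tendsto F atTop (𝓝 1) ↔ ∀ a < 1, ∀ᶠ K in atTop, a < F K :=
  ⟨fun h _ ha => (tendsto_order.1 h).1 _ ha,
    fun h => tendsto_order.2 ⟨h, fun _ hb => .of_forall fun K => (hF K).trans_lt hb⟩⟩

lemma iInf_Ici_le_liminf (h0 : ∀ K x, 0 ≤ g K x) (h1 : ∀ K x, g K x ≤ 1) (K : ℝ) :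
    ⨅ x : Ici (0 : ℝ), g K x ≤ liminf (g K) atTop := by
  refine le_liminf_of_le (isCoboundedUnder_ge_of_le atTop (h1 K)) ?_
  filter_upwards [eventually_ge_atTop 0] with x hx
  exact ciInf_le (f := fun y : Ici (0 : ℝ) => g K y)
    ⟨0, forall_mem_range.2 fun y => h0 K y⟩ ⟨x, hx⟩

lemma liminf_le_one (h0 : ∀ K x, 0 ≤ g K x) (h1 : ∀ K x, g K x ≤ 1) (K : ℝ) :
    liminf (g K) atTop ≤ 1 :=
  liminf_le_of_frequently_le (.of_forall (h1 K))
    (isBoundedUnder_of_eventually_ge (.of_forall (h0 K)))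

lemma tendsto_liminf_iff_tendsto_iInf_Ici (h0 : ∀ K x, 0 ≤ g K x) (h1 : ∀ K x, g K x ≤ 1)
    (hmono : ∀ x, Monotone (g · x))
    (hunif : ∀ x₀, TendstoUniformlyOn g (fun _ => 1) atTop (Iic x₀)) :
    Tendsto (fun K => liminf (g K) atTop) atTop (𝓝 1) ↔
      Tendsto (fun K => ⨅ x : Ici (0 : ℝ), g K x) atTop (𝓝 1) := by
  have hinf_le_one (K : ℝ) : ⨅ x : Ici (0 : ℝ), g K x ≤ 1 :=
    (iInf_Ici_le_liminf h0 h1 K).trans (liminf_le_one h0 h1 K)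
  rw [tendsto_nhds_one_iff_forall_lt_of_le_one (liminf_le_one h0 h1),
    tendsto_nhds_one_iff_forall_lt_of_le_one hinf_le_one]
  refine ⟨fun h a ha => ?_, fun h a ha => (h a ha).mono fun K hK =>
    hK.trans_le (iInf_Ici_le_liminf h0 h1 K)⟩
  obtain ⟨b, hab, hb⟩ := exists_between ha
  obtain ⟨K₀, hK₀⟩ := (h b hb).exists
  obtain ⟨x₀, hx₀⟩ := eventually_atTop.1
    (eventually_lt_of_lt_liminf hK₀ (isBoundedUnder_of_eventually_ge (.of_forall (h0 K₀))))
  have hnear : ∀ᶠ K in atTop, ∀ x ∈ Iic x₀, dist 1 (g K x) < 1 - b :=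
    Metric.tendstoUniformlyOn_iff.1 (hunif x₀) _ (sub_pos.2 hb)
  filter_upwards [hnear, eventually_ge_atTop K₀] with K hKnear hKK₀
  refine hab.trans_le (le_ciInf fun ⟨x, _⟩ => ?_)
  rcases le_total x x₀ with hx | hx
  · have := hKnear x hx
    rw [Real.dist_eq, abs_lt] at this
    linarith
  · exact (hx₀ x hx).le.trans (hmono x hKK₀)

end LiminfInf

lemma setOf_secondLe_mono {n : ℕ} {K K' : ℝ} (h : K ≤ K') :
    {v : Fin n → ℝ | SecondLe K v} ⊆ {v | SecondLe K' v} :=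
  fun _ hv i j hij => (hv i j hij).imp (·.trans h) (·.trans h)

lemma setOf_not_secondLe_subset {n : ℕ} (K : ℝ) :
    {v : Fin n → ℝ | ¬ SecondLe K v} ⊆ {v | ∃ i, K < v i} := by
  intro v hv
  by_contra hlt
  exact hv fun i _ _ => Or.inl (not_lt.1 fun h => hlt ⟨i, h⟩)

lemma tendsto_measure_exists_lt_atTop {ι : Type*} [Finite ι] (ν : Measure (ι → ℝ))
    [IsFiniteMeasure ν] : Tendsto (fun K : ℝ => ν {v | ∃ i, K < v i}) atTop (𝓝 0) := by
  have hmeas (K : ℝ) : NullMeasurableSet {v : ι → ℝ | ∃ i, K < v i} ν := by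
    rw [ofPred_exists]
    exact (MeasurableSet.iUnion fun i => measurableSet_lt measurable_const
      (measurable_pi_apply i)).nullMeasurableSet
  have hanti : Antitone fun K : ℝ => {v : ι → ℝ | ∃ i, K < v i} :=
    fun _ _ hKK' _ ⟨i, hi⟩ => ⟨i, hKK'.trans_lt hi⟩
  have hempty : ⋂ K : ℝ, {v : ι → ℝ | ∃ i, K < v i} = ∅ := by
    refine eq_empty_of_forall_notMem fun v hv => ?_
    obtain ⟨K, hK⟩ := (finite_range v).bddAbove
    obtain ⟨i, hi⟩ := mem_iInter.1 hv K
    exact hi.not_ge (hK (mem_range_self i))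
  simpa [hempty, Function.comp_def] using
    tendsto_measure_iInter_atTop hmeas hanti ⟨0, measure_ne_top _ _⟩

lemma piP_nonneg (μ : Measure ℝ) {n : ℕ} (A : Set (Fin n → ℝ)) : 0 ≤ piP μ n A :=
  ENNReal.toReal_nonneg

lemma condN_nonneg (μ : Measure ℝ) {n : ℕ} (A : Set (Fin n → ℝ)) (x : ℝ) : 0 ≤ condN μ n A x :=
  div_nonneg (piP_nonneg μ _) (piP_nonneg μ _)

section ConditionalProbability

variable (μ : Measure ℝ) [IsFiniteMeasure μ] {n : ℕ}

lemma piP_mono {A B : Set (Fin n → ℝ)} (h : A ⊆ B) : piP μ n A ≤ piP μ n B :=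
  ENNReal.toReal_mono (measure_ne_top _ _) (measure_mono h)

lemma piP_le_inter_add_compl (A B : Set (Fin n → ℝ)) :
    piP μ n B ≤ piP μ n (A ∩ B) + piP μ n Aᶜ := by
  unfold piP
  rw [← ENNReal.toReal_add (measure_ne_top _ _) (measure_ne_top _ _)]
  refine ENNReal.toReal_mono (by finiteness) ((measure_le_inter_add_sdiff _ B A).trans ?_)
  rw [inter_comm]
  gcongr
  exact fun _ hv => hv.2

lemma condN_le_one (A : Set (Fin n → ℝ)) (x : ℝ) : condN μ n A x ≤ 1 :=
  div_le_one_of_le₀ (piP_mono μ inter_subset_right) (piP_nonneg μ _)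

lemma condN_mono {A B : Set (Fin n → ℝ)} (h : A ⊆ B) (x : ℝ) :
    condN μ n A x ≤ condN μ n B x :=
  div_le_div_of_nonneg_right (piP_mono μ (inter_subset_inter_left _ h)) (piP_nonneg μ _)

lemma one_sub_le_condN (A : Set (Fin n → ℝ)) {x : ℝ} (hx : 0 < piP μ n {v | SumGt x v}) :
    1 - piP μ n Aᶜ / piP μ n {v | SumGt x v} ≤ condN μ n A x := by
  rw [condN, sub_le_iff_le_add, ← add_div, le_div_iff₀ hx, one_mul]
  exact piP_le_inter_add_compl μ A _

lemma piP_sumGt_antitone : Antitone fun x : ℝ => piP μ n {v | SumGt x v} :=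
  fun _ _ hxy => piP_mono μ fun _ hv => hxy.trans_lt hv

lemma piP_sumGt_pos (hub : ∀ x : ℝ, 0 < μ (Ioi x)) (hn : 0 < n) (x : ℝ) :
    0 < piP μ n {v | SumGt x v} := by
  have : Nonempty (Fin n) := ⟨⟨0, hn⟩⟩
  have hsub : univ.pi (fun _ : Fin n => Ioi |x|) ⊆ {v | SumGt x v} := by
    intro v hv
    have hsum : ∑ _i : Fin n, |x| < ∑ i, v i :=
      Finset.sum_lt_sum_of_nonempty Finset.univ_nonempty fun i _ => hv i (mem_univ i)
    have hn1 : (1 : ℝ) ≤ n := by exact_mod_cast hn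
    simp only [Finset.sum_const, Finset.card_univ, Fintype.card_fin, nsmul_eq_mul] at hsum
    exact (le_abs_self x).trans_lt
      ((le_mul_of_one_le_left (abs_nonneg x) hn1).trans_lt hsum)
  refine ENNReal.toReal_pos (ne_of_gt ?_) (measure_ne_top _ _)
  calc 0 < μ (Ioi |x|) ^ n := ENNReal.pow_pos (hub _) n
    _ = _ := by simp [Measure.pi_pi]
    _ ≤ _ := measure_mono hsub

lemma tendsto_piP_not_secondLe :
    Tendsto (fun K : ℝ => piP μ n {v | ¬ SecondLe K v}) atTop (𝓝 0) := by
  have h := (ENNReal.tendsto_toReal ENNReal.zero_ne_top).comp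
    (tendsto_measure_exists_lt_atTop (Measure.pi fun _ : Fin n => μ))
  refine squeeze_zero (fun K => piP_nonneg μ _) (fun K => ?_) h
  exact piP_mono μ (setOf_not_secondLe_subset K)

lemma tendstoUniformlyOn_condN_secondLe (hub : ∀ x : ℝ, 0 < μ (Ioi x)) (hn : 0 < n) (x₀ : ℝ) :
    TendstoUniformlyOn (fun K x => condN μ n {v | SecondLe K v} x) (fun _ => 1) atTop
      (Iic x₀) := by
  set c := piP μ n {v | SumGt x₀ v}
  have hc : 0 < c := piP_sumGt_pos μ hub hn x₀
  refine Metric.tendstoUniformlyOn_iff.2 fun ε hε => ?_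
  filter_upwards [(tendsto_piP_not_secondLe μ).eventually_lt_const (mul_pos hε hc)]
    with K hK x hx
  have hdx : c ≤ piP μ n {v | SumGt x v} := piP_sumGt_antitone μ hx
  have hlow := one_sub_le_condN μ {v | SecondLe K v} (hc.trans_le hdx)
  have hcompl : piP μ n {v | SecondLe K v}ᶜ / piP μ n {v | SumGt x v} < ε := by
    rw [div_lt_iff₀ (hc.trans_le hdx)]
    exact hK.trans_le (by gcongr)
  rw [Real.dist_eq, abs_sub_lt_iff]
  constructor <;> linarith [condN_le_one μ (n := n) {v | SecondLe K v} x]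

end ConditionalProbability

theorem stmt1_general (μ : Measure ℝ) [IsProbabilityMeasure μ]
    (hub : ∀ x : ℝ, 0 < μ (Set.Ioi x))
    (n : ℕ) (hn : 2 ≤ n) :
    Tendsto (fun K : ℝ =>
        liminf (fun x : ℝ => condN μ n {v | SecondLe K v} x) atTop) atTop (nhds 1)
    ↔ Tendsto (fun K : ℝ =>
        ⨅ x : Set.Ici (0:ℝ), condN μ n {v | SecondLe K v} (x : ℝ)) atTop (nhds 1) :=
  tendsto_liminf_iff_tendsto_iInf_Ici (fun _ => condN_nonneg μ _) (fun _ => condN_le_one μ _)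
    (fun x _ _ hKK' => condN_mono μ (setOf_secondLe_mono hKK') x)
    (tendstoUniformlyOn_condN_secondLe μ hub (by omega))

theorem stmt1 (μ : Measure ℝ) [IsProbabilityMeasure μ]
    (hnn : μ (Set.Iio 0) = 0) (hub : ∀ x : ℝ, 0 < μ (Set.Ioi x))
    (n : ℕ) (hn : 2 ≤ n) :
    Tendsto (fun K : ℝ =>
        liminf (fun x : ℝ => condN μ n {v | SecondLe K v} x) atTop) atTop (nhds 1)
    ↔ Tendsto (fun K : ℝ =>
        ⨅ x : Set.Ici (0:ℝ), condN μ n {v | SecondLe K v} (x : ℝ)) atTop (nhds 1) :=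
  stmt1_general μ hub n hn
end

section
/- If F ∈ 𝓙 (i.e., lim_{K→∞} liminf_{x→∞} P(max(X₁,X₂) > x − K | X₁ + X₂ > x) = 1 for i.i.d. X₁, X₂ ∼ F), then F ∈ 𝓞𝓢, i.e., limsup_{x→∞} (1 − F*F)(x) / (1 − F)(x) < ∞. -/
open MeasureTheory Filter Set

/-- The class 𝓙 : `lim_{K→∞} liminf_{x→∞} P(max(X₁,X₂) > x − K | X₁ + X₂ > x) = 1`. -/
def MemJ (μ : Measure ℝ) : Prop :=
  Tendsto (fun K : ℝ =>
      liminf (fun x : ℝ => condPair μ {p | x - K < max p.1 p.2} x) atTop)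
    atTop (nhds 1)

/-- The class 𝓙 (equivalent form): for every nonnegative, unbounded, nondecreasing `g`,
`lim_{x→∞} P(min(X₁,X₂) > g(x) | X₁ + X₂ > x) = 0`. -/
def MemJg (μ : Measure ℝ) : Prop :=
  ∀ g : ℝ → ℝ, (∀ x, 0 ≤ g x) → Monotone g → (∀ M, ∃ x, M < g x) →
    Tendsto (fun x : ℝ => condPair μ {p | g x < min p.1 p.2} x) atTop (nhds 0)

/-- Tail of the two-fold convolution: `F̄²*(x) = P(X₁ + X₂ > x)`. -/
noncomputable def tail2 (μ : Measure ℝ) (x : ℝ) : ℝ := ((μ.prod μ) {p | x < p.1 + p.2}).toReal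

/-- Weak asymptotic tail-equivalence `F̄ ≍ Ḡ`:
`0 < liminf F̄(x)/Ḡ(x) ≤ limsup F̄(x)/Ḡ(x) < ∞`. -/
def WeakTailEquiv (μ ν : Measure ℝ) : Prop :=
  (∃ c : ℝ, 0 < c ∧ ∀ᶠ x in atTop, c * tail ν x ≤ tail μ x) ∧
  (∃ C : ℝ, ∀ᶠ x in atTop, tail μ x ≤ C * tail ν x)

/-- Convolution of two laws on ℝ. -/
noncomputable def conv (μ ν : Measure ℝ) : Measure ℝ :=
  Measure.map (fun p : ℝ × ℝ => p.1 + p.2) (μ.prod ν)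

/-- `n`-fold convolution `F^{n*}`. -/
noncomputable def nconv (μ : Measure ℝ) : ℕ → Measure ℝ
  | 0 => Measure.dirac 0
  | n + 1 => conv (nconv μ n) μ

theorem stmt5 (μ : Measure ℝ) [IsProbabilityMeasure μ]
    (hnn : μ (Set.Iio 0) = 0) (hub : ∀ x : ℝ, 0 < μ (Set.Ioi x))
    (hJ : MemJ μ) :
    ∃ C : ℝ, ∀ᶠ x in atTop, tail2 μ x ≤ C * tail μ x := by
  have h1 : ∀ᶠ K in atTop,
      1/2 < liminf (fun x : ℝ => condPair μ {p | x - K < max p.1 p.2} x) atTop :=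
    hJ.eventually (eventually_gt_nhds (by norm_num : (1:ℝ)/2 < 1))
  obtain ⟨K, hK⟩ := h1.exists
  have hbdd : IsBoundedUnder (· ≥ ·) atTop
      (fun x : ℝ => condPair μ {p | x - K < max p.1 p.2} x) :=
    isBoundedUnder_of ⟨0, fun x => div_nonneg ENNReal.toReal_nonneg ENNReal.toReal_nonneg⟩
  have h2 : ∀ᶠ x in atTop, 1/2 < condPair μ {p | x - K < max p.1 p.2} x :=
    eventually_lt_of_lt_liminf hK hbdd
  -- key pointwise lemma
  have key : ∀ x : ℝ, 1/2 < condPair μ {p | x - K < max p.1 p.2} x →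
      tail2 μ x ≤ 4 * tail μ (x - K) := by
    intro x hx
    set aR : ℝ := ((μ.prod μ) ({p : ℝ × ℝ | x - K < max p.1 p.2} ∩ {p | x < p.1 + p.2})).toReal with haR
    set bR : ℝ := ((μ.prod μ) {p : ℝ × ℝ | x < p.1 + p.2}).toReal with hbR
    have hcp : 1/2 < aR / bR := hx
    have hb0 : 0 < bR := by
      by_contra h
      have : bR = 0 := le_antisymm (not_lt.mp h) ENNReal.toReal_nonneg
      rw [this, div_zero] at hcp; linarith
    have hba : bR < 2 * aR := by
      have := (lt_div_iff₀ hb0).mp hcp; linarith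
    have hs1 : (μ.prod μ) {p : ℝ × ℝ | x - K < p.1} = μ (Set.Ioi (x - K)) := by
      have he : {p : ℝ × ℝ | x - K < p.1} = Set.Ioi (x - K) ×ˢ Set.univ := by
        ext p; simp [Set.mem_prod]
      rw [he, Measure.prod_prod, measure_univ, mul_one]
    have hs2 : (μ.prod μ) {p : ℝ × ℝ | x - K < p.2} = μ (Set.Ioi (x - K)) := by
      have he : {p : ℝ × ℝ | x - K < p.2} = Set.univ ×ˢ Set.Ioi (x - K) := by
        ext p; simp [Set.mem_prod]
      rw [he, Measure.prod_prod, measure_univ, one_mul]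
    have hAm : (μ.prod μ) ({p : ℝ × ℝ | x - K < max p.1 p.2} ∩ {p | x < p.1 + p.2})
        ≤ μ (Set.Ioi (x - K)) + μ (Set.Ioi (x - K)) := by
      calc (μ.prod μ) ({p : ℝ × ℝ | x - K < max p.1 p.2} ∩ {p | x < p.1 + p.2})
          ≤ (μ.prod μ) ({p : ℝ × ℝ | x - K < p.1} ∪ {p : ℝ × ℝ | x - K < p.2}) := by
            apply measure_mono
            intro p hp
            have h1 : x - K < max p.1 p.2 := hp.1
            rcases lt_max_iff.mp h1 with h | h
            exacts [Or.inl h, Or.inr h]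
        _ ≤ (μ.prod μ) {p : ℝ × ℝ | x - K < p.1} + (μ.prod μ) {p : ℝ × ℝ | x - K < p.2} :=
            measure_union_le _ _
        _ = μ (Set.Ioi (x - K)) + μ (Set.Ioi (x - K)) := by rw [hs1, hs2]
    have haT : aR ≤ 2 * tail μ (x - K) := by
      have hfin : μ (Set.Ioi (x - K)) + μ (Set.Ioi (x - K)) ≠ ⊤ :=
        ENNReal.add_ne_top.mpr ⟨measure_ne_top _ _, measure_ne_top _ _⟩
      have := ENNReal.toReal_mono hfin hAm
      rw [ENNReal.toReal_add (measure_ne_top _ _) (measure_ne_top _ _)] at this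
      unfold tail; linarith [this]
    have : tail2 μ x = bR := rfl
    rw [this]; linarith
  -- lower bound on tail2 at x + K
  have hlow : ∀ x : ℝ, tail μ (x - K) * tail μ (2 * K) ≤ tail2 μ (x + K) := by
    intro x
    have hsub : Set.Ioi (x - K) ×ˢ Set.Ioi (2 * K) ⊆ {p : ℝ × ℝ | x + K < p.1 + p.2} := by
      rintro ⟨a, b⟩ ⟨ha, hb⟩
      simp only [Set.mem_Ioi] at ha hb
      simp only [Set.mem_setOf_eq]
      linarith
    have := measure_mono (μ := μ.prod μ) hsub
    rw [Measure.prod_prod] at this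
    have hfin : (μ.prod μ) {p : ℝ × ℝ | x + K < p.1 + p.2} ≠ ⊤ := measure_ne_top _ _
    have h' := ENNReal.toReal_mono hfin this
    rw [ENNReal.toReal_mul] at h'
    exact h'
  -- positivity of tail at 2K
  have hτ : 0 < tail μ (2 * K) :=
    ENNReal.toReal_pos (hub (2 * K)).ne' (measure_ne_top _ _)
  refine ⟨16 / tail μ (2 * K), ?_⟩
  have h3 : ∀ᶠ x : ℝ in atTop, 1/2 < condPair μ {p | x + K - K < max p.1 p.2} (x + K) :=
    (tendsto_atTop_add_const_right atTop K tendsto_id).eventually h2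
  filter_upwards [h2, h3] with x hx hxK
  have k1 : tail2 μ x ≤ 4 * tail μ (x - K) := key x hx
  have k2 : tail2 μ (x + K) ≤ 4 * tail μ (x + K - K) := key (x + K) hxK
  rw [add_sub_cancel_right] at k2
  have k3 := hlow x
  rw [div_mul_eq_mul_div, le_div_iff₀ hτ]
  nlinarith [mul_le_mul_of_nonneg_right k1 hτ.le]
end

section
/- The class 𝓙 is closed under weak tail-equivalence: if F ∈ 𝓙 and 0 < liminf_{x→∞} F̄(x)/Ḡ(x) ≤ limsup_{x→∞} F̄(x)/Ḡ(x) < ∞, then G ∈ 𝓙. -/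
open MeasureTheory Filter Set

open scoped ENNReal NNReal

/-! Weak tail equivalence transfers to the two events that make up the conditional probability.
By Fubini, every section of `{a < min(X₁, X₂), x < X₁ + X₂}` is empty or a half-line `(b, ∞)` with
`b ≥ a`, so replacing one factor at a time gives
`P_ν(min > g(x), sum > x) ≤ c² P_μ(min > g(x), sum > x)` as soon as `g(x)` lies beyond the point
from which `Ḡ ≤ c F̄`. Conversely, splitting `{X₁ + X₂ > x}` according to whether both summands
exceed `x₀` gives `P_μ(X₁ + X₂ > x) ≤ (C² + 2C / Ḡ(x₀)) P_ν(X₁ + X₂ > x)`. So the conditional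
probabilities for `ν` are eventually bounded by a constant times those for `μ`. -/

namespace MeasureTheory.Measure

variable {α β : Type*} [MeasurableSpace α] [MeasurableSpace β] {E : Set (α × β)} {c : ℝ≥0∞}

theorem prod_apply_le_mul_of_preimage_mk_le {μ : Measure α} {ν ν' : Measure β} [SFinite ν]
    [SFinite ν'] (hE : MeasurableSet E) (h : ∀ x, ν (Prod.mk x ⁻¹' E) ≤ c * ν' (Prod.mk x ⁻¹' E)) :
    μ.prod ν E ≤ c * μ.prod ν' E := by
  rw [prod_apply hE, prod_apply hE, ← lintegral_const_mul c (measurable_measure_prodMk_left hE)]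
  exact lintegral_mono h

theorem prod_apply_le_mul_of_preimage_mk_le_left {μ μ' : Measure α} {ν : Measure β} [SFinite μ]
    [SFinite μ'] [SFinite ν] (hE : MeasurableSet E)
    (h : ∀ y, μ ((·, y) ⁻¹' E) ≤ c * μ' ((·, y) ⁻¹' E)) :
    μ.prod ν E ≤ c * μ'.prod ν E := by
  rw [prod_apply_symm hE, prod_apply_symm hE,
    ← lintegral_const_mul c (measurable_measure_prodMk_right hE)]
  exact lintegral_mono h

end MeasureTheory.Measure

section TailComparison

theorem preimage_mk_minGt_inter_sumGt (a x y : ℝ) :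
    Prod.mk y ⁻¹' ({p : ℝ × ℝ | a < min p.1 p.2} ∩ {p | x < p.1 + p.2}) =
      if a < y then Ioi (max a (x - y)) else ∅ := by
  ext z
  split_ifs with hy
  · simp only [mem_preimage, mem_inter_iff, mem_ofPred_eq, mem_Ioi, lt_min_iff, max_lt_iff]
    constructor
    · rintro ⟨⟨-, haz⟩, hxz⟩
      exact ⟨haz, by linarith⟩
    · rintro ⟨haz, hxz⟩
      exact ⟨⟨hy, haz⟩, by linarith⟩
  · simp only [mem_preimage, mem_inter_iff, mem_ofPred_eq, lt_min_iff, mem_empty_iff_false,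
      iff_false]
    exact fun h => hy h.1.1

variable {μ ν : Measure ℝ} {a x : ℝ} {c : ℝ≥0∞}

theorem measure_preimage_mk_minGt_inter_sumGt_le
    (h : ∀ b, a ≤ b → ν (Ioi b) ≤ c * μ (Ioi b)) (y : ℝ) :
    ν (Prod.mk y ⁻¹' ({p : ℝ × ℝ | a < min p.1 p.2} ∩ {p | x < p.1 + p.2})) ≤
      c * μ (Prod.mk y ⁻¹' ({p : ℝ × ℝ | a < min p.1 p.2} ∩ {p | x < p.1 + p.2})) := by
  rw [preimage_mk_minGt_inter_sumGt]
  split_ifs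
  · exact h _ (le_max_left _ _)
  · simp

theorem prod_minGt_inter_sumGt_le [SFinite μ] [SFinite ν]
    (h : ∀ b, a ≤ b → ν (Ioi b) ≤ c * μ (Ioi b)) :
    (ν.prod ν) ({p : ℝ × ℝ | a < min p.1 p.2} ∩ {p | x < p.1 + p.2}) ≤
      c * c * (μ.prod μ) ({p : ℝ × ℝ | a < min p.1 p.2} ∩ {p | x < p.1 + p.2}) := by
  have hE : MeasurableSet ({p : ℝ × ℝ | a < min p.1 p.2} ∩ {p | x < p.1 + p.2}) :=
    (measurableSet_lt measurable_const (measurable_fst.min measurable_snd)).inter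
      (measurableSet_lt measurable_const (measurable_fst.add measurable_snd))
  have hswap : ∀ y : ℝ, ((·, y) ⁻¹' ({p : ℝ × ℝ | a < min p.1 p.2} ∩ {p | x < p.1 + p.2})) =
      Prod.mk y ⁻¹' ({p : ℝ × ℝ | a < min p.1 p.2} ∩ {p | x < p.1 + p.2}) := by
    intro y
    ext z
    simp only [mem_preimage, mem_inter_iff, mem_ofPred_eq, min_comm z y, add_comm z y]
  calc (ν.prod ν) _ ≤ c * (ν.prod μ) _ := Measure.prod_apply_le_mul_of_preimage_mk_le hE
        (measure_preimage_mk_minGt_inter_sumGt_le h)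
    _ ≤ c * (c * (μ.prod μ) _) := by
        gcongr
        refine Measure.prod_apply_le_mul_of_preimage_mk_le_left hE fun y => ?_
        simpa only [hswap] using measure_preimage_mk_minGt_inter_sumGt_le h y
    _ = c * c * (μ.prod μ) _ := (mul_assoc _ _ _).symm

theorem measure_Ioi_mul_measure_Ioi_le_prod_sumGt (ν : Measure ℝ) [SFinite ν] (x b : ℝ) :
    ν (Ioi (x - b)) * ν (Ioi b) ≤ (ν.prod ν) {p : ℝ × ℝ | x < p.1 + p.2} := by
  rw [← Measure.prod_prod]
  refine measure_mono fun p hp => ?_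
  simp only [mem_prod, mem_Ioi] at hp
  simp only [mem_ofPred_eq]
  linarith [hp.1, hp.2]

theorem prod_sumGt_le [IsProbabilityMeasure μ] [IsFiniteMeasure ν] {C : ℝ≥0∞} {x₀ : ℝ}
    (h : ∀ y, x₀ ≤ y → μ (Ioi y) ≤ C * ν (Ioi y)) (hν : ν (Ioi x₀) ≠ 0) (hx : 2 * x₀ ≤ x) :
    (μ.prod μ) {p : ℝ × ℝ | x < p.1 + p.2} ≤
      (C * C + 2 * C * (ν (Ioi x₀))⁻¹) * (ν.prod ν) {p : ℝ × ℝ | x < p.1 + p.2} := by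
  set S := {p : ℝ × ℝ | x < p.1 + p.2}
  have hcover : S ⊆ ({p : ℝ × ℝ | x₀ < min p.1 p.2} ∩ S) ∪
      (univ ×ˢ Ioi (x - x₀) ∪ Ioi (x - x₀) ×ˢ univ) := by
    intro p hp
    simp only [S, mem_union, mem_inter_iff, mem_prod, mem_ofPred_eq, mem_univ, mem_Ioi,
      lt_min_iff, true_and, and_true] at hp ⊢
    by_cases hp₁ : x₀ < p.1
    · by_cases hp₂ : x₀ < p.2
      · exact Or.inl ⟨⟨hp₁, hp₂⟩, hp⟩
      · exact Or.inr (Or.inr (by linarith))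
    · exact Or.inr (Or.inl (by linarith))
  have hmarginal : μ (Ioi (x - x₀)) ≤ C * ((ν (Ioi x₀))⁻¹ * (ν.prod ν) S) := by
    calc μ (Ioi (x - x₀)) ≤ C * ν (Ioi (x - x₀)) := h _ (by linarith)
      _ = C * ((ν (Ioi x₀))⁻¹ * (ν (Ioi (x - x₀)) * ν (Ioi x₀))) := by
          rw [mul_comm (ν (Ioi (x - x₀))), ← mul_assoc (ν (Ioi x₀))⁻¹,
            ENNReal.inv_mul_cancel hν (measure_ne_top _ _), one_mul]
      _ ≤ C * ((ν (Ioi x₀))⁻¹ * (ν.prod ν) S) := by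
          gcongr
          exact measure_Ioi_mul_measure_Ioi_le_prod_sumGt ν x x₀
  calc (μ.prod μ) S
      ≤ (μ.prod μ) ({p : ℝ × ℝ | x₀ < min p.1 p.2} ∩ S) +
          ((μ.prod μ) (univ ×ˢ Ioi (x - x₀)) + (μ.prod μ) (Ioi (x - x₀) ×ˢ univ)) :=
        (measure_mono hcover).trans <|
          (measure_union_le _ _).trans (add_le_add le_rfl (measure_union_le _ _))
    _ ≤ C * C * (ν.prod ν) S +
          (C * ((ν (Ioi x₀))⁻¹ * (ν.prod ν) S) + C * ((ν (Ioi x₀))⁻¹ * (ν.prod ν) S)) := by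
        simp only [Measure.prod_prod, measure_univ, one_mul, mul_one]
        gcongr
        refine (prod_minGt_inter_sumGt_le h).trans ?_
        gcongr
        exact inter_subset_right
    _ = (C * C + 2 * C * (ν (Ioi x₀))⁻¹) * (ν.prod ν) S := by ring

theorem measure_Ioi_le_ofReal_mul_of_tail_le [IsFiniteMeasure μ] [IsFiniteMeasure ν] {C y : ℝ}
    (h : tail μ y ≤ C * tail ν y) : μ (Ioi y) ≤ ENNReal.ofReal C * ν (Ioi y) :=
  calc μ (Ioi y) = ENNReal.ofReal (tail μ y) := (ENNReal.ofReal_toReal (measure_ne_top _ _)).symm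
    _ ≤ ENNReal.ofReal (C * tail ν y) := ENNReal.ofReal_le_ofReal h
    _ = ENNReal.ofReal C * ν (Ioi y) := by
      rw [tail, ENNReal.ofReal_mul' ENNReal.toReal_nonneg,
        ENNReal.ofReal_toReal (measure_ne_top _ _)]

theorem WeakTailEquiv.exists_measure_Ioi_le [IsFiniteMeasure μ] [IsFiniteMeasure ν]
    (h : WeakTailEquiv μ ν) : ∃ (c C : ℝ≥0) (x₀ : ℝ),
      (∀ y, x₀ ≤ y → ν (Ioi y) ≤ c * μ (Ioi y)) ∧ (∀ y, x₀ ≤ y → μ (Ioi y) ≤ C * ν (Ioi y)) := by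
  obtain ⟨⟨c, hc, hlow⟩, ⟨C, hup⟩⟩ := h
  obtain ⟨xl, hxl⟩ := eventually_atTop.mp hlow
  obtain ⟨xu, hxu⟩ := eventually_atTop.mp hup
  refine ⟨c⁻¹.toNNReal, C.toNNReal, max xl xu, fun y hy => ?_, fun y hy => ?_⟩
  · refine measure_Ioi_le_ofReal_mul_of_tail_le ((le_inv_mul_iff₀ hc).2 (hxl y ?_))
    exact (le_max_left _ _).trans hy
  · exact measure_Ioi_le_ofReal_mul_of_tail_le (hxu y ((le_max_right _ _).trans hy))

end TailComparison

theorem div_le_mul_mul_div {a₁ a₂ b₁ b₂ L K : ℝ} (ha₂ : 0 ≤ a₂) (hb₁ : 0 ≤ b₁) (hL : 0 ≤ L)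
    (hK : 0 ≤ K) (hab₂ : a₂ ≤ b₂) (ha : a₁ ≤ L * a₂) (hb : b₂ ≤ K * b₁) :
    a₁ / b₁ ≤ L * K * (a₂ / b₂) := by
  obtain rfl | hb₁ := hb₁.eq_or_lt
  · rw [div_zero]
    exact mul_nonneg (mul_nonneg hL hK) (div_nonneg ha₂ (ha₂.trans hab₂))
  obtain hb₂ | hb₂ := (ha₂.trans hab₂).eq_or_lt
  · obtain rfl : a₂ = 0 := le_antisymm (hb₂ ▸ hab₂) ha₂
    rw [← hb₂, div_zero, mul_zero]
    exact div_nonpos_of_nonpos_of_nonneg (by simpa using ha) hb₁.le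
  rw [div_le_iff₀ hb₁]
  calc a₁ ≤ L * a₂ := ha
    _ = L * (a₂ / b₂) * b₂ := by field_simp
    _ ≤ L * (a₂ / b₂) * (K * b₁) := by gcongr
    _ = L * K * (a₂ / b₂) * b₁ := by ring

theorem condPair_le_mul {μ ν : Measure ℝ} [IsFiniteMeasure μ] [IsFiniteMeasure ν]
    {A : Set (ℝ × ℝ)} {x : ℝ} {L K : ℝ≥0∞} (hL : L ≠ ⊤) (hK : K ≠ ⊤)
    (hA : (ν.prod ν) (A ∩ {p | x < p.1 + p.2}) ≤ L * (μ.prod μ) (A ∩ {p | x < p.1 + p.2}))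
    (hS : (μ.prod μ) {p : ℝ × ℝ | x < p.1 + p.2} ≤ K * (ν.prod ν) {p | x < p.1 + p.2}) :
    condPair ν A x ≤ (L * K).toReal * condPair μ A x := by
  rw [condPair, condPair, ENNReal.toReal_mul]
  refine div_le_mul_mul_div ENNReal.toReal_nonneg ENNReal.toReal_nonneg ENNReal.toReal_nonneg
    ENNReal.toReal_nonneg ?_ ?_ ?_
  · exact ENNReal.toReal_mono (measure_ne_top _ _) (measure_mono inter_subset_right)
  · rw [← ENNReal.toReal_mul]
    exact ENNReal.toReal_mono (by finiteness) hA
  · rw [← ENNReal.toReal_mul]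
    exact ENNReal.toReal_mono (by finiteness) hS

theorem stmt9_general (μ ν : Measure ℝ) [IsProbabilityMeasure μ] [IsProbabilityMeasure ν]
    (hνub : ∀ x : ℝ, 0 < ν (Set.Ioi x))
    (hJ : MemJg μ) (heq : WeakTailEquiv μ ν) :
    MemJg ν := by
  obtain ⟨c, C, x₀, hνμ, hμν⟩ := heq.exists_measure_Ioi_le
  intro g hg0 hgmono hgunb
  obtain ⟨x₁, hx₁⟩ := hgunb x₀
  set M := ((c : ℝ≥0∞) * c * (C * C + 2 * C * (ν (Ioi x₀))⁻¹)).toReal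
  refine squeeze_zero' (Eventually.of_forall fun x =>
      div_nonneg ENNReal.toReal_nonneg ENNReal.toReal_nonneg) ?_
    (by simpa only [mul_zero] using (hJ g hg0 hgmono hgunb).const_mul M)
  filter_upwards [eventually_ge_atTop x₁, eventually_ge_atTop (2 * x₀)] with x hx₁x hx₀x
  have hgx : x₀ ≤ g x := hx₁.le.trans (hgmono hx₁x)
  have hinv : (ν (Ioi x₀))⁻¹ ≠ ⊤ := ENNReal.inv_ne_top.2 (hνub x₀).ne'
  exact condPair_le_mul (by finiteness) (by finiteness)
    (prod_minGt_inter_sumGt_le fun b hb => hνμ b (hgx.trans hb))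
    (prod_sumGt_le hμν (hνub x₀).ne' hx₀x)

theorem stmt9 (μ ν : Measure ℝ) [IsProbabilityMeasure μ] [IsProbabilityMeasure ν]
    (hμnn : μ (Set.Iio 0) = 0) (hμub : ∀ x : ℝ, 0 < μ (Set.Ioi x))
    (hνnn : ν (Set.Iio 0) = 0) (hνub : ∀ x : ℝ, 0 < ν (Set.Ioi x))
    (hJ : MemJg μ) (heq : WeakTailEquiv μ ν) :
    MemJg ν :=
  stmt9_general μ ν hνub hJ heq
end

section
/- If F ∈ 𝓙 and Ḡ is weakly tail-equivalent to F̄, then the convolution F*G belongs to 𝓙. -/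
open MeasureTheory Filter Set

/-!
Tail comparison transfers upward events: if `κ̄ ≤ C η̄` everywhere, then `(κ ⊗ κ) S ≤ C² (η ⊗ η) S`
for every set `S ⊆ ℝ²` whose sections are open upper rays, since each section measure is
compared separately. Both events in a conditional probability defining `𝓙` are of this kind,
so `𝓙` is stable under global two-sided tail comparison, and `μ * ν` compares with `μ * μ`
in this way. It therefore suffices that `μ ∈ 𝓙` implies `μ * μ ∈ 𝓙`.

For that write `Zᵢ = Xᵢ + Yᵢ` with `X₁, Y₁, X₂, Y₂` i.i.d. `μ` and `h = g / 2`. If both `Zᵢ > g`,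
then one summand of each `Zᵢ` exceeds `h`; by symmetry it is enough to treat `X₁, X₂ > h`.
Conditioning on `s = Y₁ + Y₂ ≥ 0`: for `s ≤ x - h` the conditional probability is at most
`ε · P(X₁ + X₂ > x - s)` because `μ ∈ 𝓙`, and for `s > x - h` it is at most `μ̄(h)²`, while
`μ̄(h) P(Y₁ + Y₂ > x - h) ≤ P(X₁ + X₂ > h) P(Y₁ + Y₂ > x - h) ≤ P(Z₁ + Z₂ > x)`.
-/

open scoped ENNReal Topology

lemma tendsto_measure_Ioi_atTop (μ : Measure ℝ) [IsFiniteMeasure μ] :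
    Tendsto (fun t => μ (Ioi t)) atTop (𝓝 0) := by
  have h := tendsto_measure_iInter_atTop (μ := μ) (s := Ioi)
    (fun _ => measurableSet_Ioi.nullMeasurableSet) (fun _ _ hab => Ioi_subset_Ioi hab)
    ⟨0, measure_ne_top μ _⟩
  have hempty : ⋂ t : ℝ, Ioi t = ∅ := iInter_eq_empty_iff.2 fun t => ⟨t, lt_irrefl t⟩
  rwa [hempty, measure_empty] at h

lemma tendsto_biSup_Ici_of_tendsto_zero {α : Type*} [SemilatticeSup α] [Nonempty α]
    {f : α → ℝ≥0∞} (hf : Tendsto f atTop (𝓝 0)) :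
    Tendsto (fun T => ⨆ t ∈ Ici T, f t) atTop (𝓝 0) := by
  rw [ENNReal.tendsto_nhds_zero] at hf ⊢
  intro ε hε
  obtain ⟨T₀, hT₀⟩ := eventually_atTop.1 (hf ε hε)
  filter_upwards [eventually_ge_atTop T₀] with T hT
  exact iSup₂_le fun t ht => hT₀ t (hT.trans ht)

lemma exists_measure_Ioi_le_mul {μ ν : Measure ℝ} [IsFiniteMeasure μ] [IsFiniteMeasure ν]
    (hμ : ∀ x, 0 < μ (Ioi x)) {C : ℝ} (h : ∀ᶠ x in atTop, tail ν x ≤ C * tail μ x) :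
    ∃ C' : ℝ≥0∞, C' ≠ ∞ ∧ ∀ t, ν (Ioi t) ≤ C' * μ (Ioi t) := by
  obtain ⟨x₀, hx₀⟩ := eventually_atTop.1 h
  refine ⟨max (ENNReal.ofReal C) (ν univ / μ (Ioi x₀)), ?_, fun t => ?_⟩
  · exact (max_lt ENNReal.ofReal_lt_top
      (ENNReal.div_lt_top (measure_ne_top _ _) (hμ x₀).ne')).ne
  rcases le_or_gt x₀ t with ht | ht
  · calc ν (Ioi t) = ENNReal.ofReal (tail ν t) :=
          (ENNReal.ofReal_toReal (measure_ne_top _ _)).symm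
      _ ≤ ENNReal.ofReal (C * tail μ t) := ENNReal.ofReal_le_ofReal (hx₀ t ht)
      _ = ENNReal.ofReal C * μ (Ioi t) := by
          rw [tail, ENNReal.ofReal_mul' ENNReal.toReal_nonneg,
            ENNReal.ofReal_toReal (measure_ne_top _ _)]
      _ ≤ _ := by gcongr; exact le_max_left _ _
  · calc ν (Ioi t) ≤ ν univ := measure_mono (subset_univ _)
      _ = ν univ / μ (Ioi x₀) * μ (Ioi x₀) :=
          (ENNReal.div_mul_cancel (hμ x₀).ne' (measure_ne_top _ _)).symm
      _ ≤ _ := mul_le_mul' (le_max_right _ _) (measure_mono (Ioi_subset_Ioi ht.le))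

def HasRaySections (S : Set (ℝ × ℝ)) : Prop :=
  ∀ a, Prod.mk a ⁻¹' S = ∅ ∨ ∃ t, Prod.mk a ⁻¹' S = Ioi t

lemma prod_le_mul_prod_of_measure_Ioi_le {μ ν : Measure ℝ} [SFinite μ] [SFinite ν] {C : ℝ≥0∞}
    (hC : ∀ t, ν (Ioi t) ≤ C * μ (Ioi t)) (ρ : Measure ℝ) {S : Set (ℝ × ℝ)}
    (hS : MeasurableSet S) (hray : HasRaySections S) :
    (ρ.prod ν) S ≤ C * (ρ.prod μ) S := by
  rw [Measure.prod_apply hS, Measure.prod_apply hS,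
    ← lintegral_const_mul _ (measurable_measure_prodMk_left hS)]
  refine lintegral_mono fun a => ?_
  rcases hray a with h | ⟨t, h⟩ <;> rw [h]
  · simp
  · exact hC t

lemma prod_self_le_mul_prod_self {κ η : Measure ℝ} [SFinite κ] [SFinite η] {C : ℝ≥0∞}
    (hC : ∀ t, κ (Ioi t) ≤ C * η (Ioi t)) {S : Set (ℝ × ℝ)} (hS : MeasurableSet S)
    (hray : HasRaySections S) (hsymm : Prod.swap ⁻¹' S = S) :
    (κ.prod κ) S ≤ C * C * (η.prod η) S := by
  have hswap : (κ.prod η) S = (η.prod κ) S := by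
    rw [← Measure.prod_swap (μ := η), Measure.map_apply measurable_swap hS, hsymm]
  calc (κ.prod κ) S ≤ C * (κ.prod η) S := prod_le_mul_prod_of_measure_Ioi_le hC κ hS hray
    _ = C * (η.prod κ) S := by rw [hswap]
    _ ≤ C * (C * (η.prod η) S) := by
        gcongr; exact prod_le_mul_prod_of_measure_Ioi_le hC η hS hray
    _ = C * C * (η.prod η) S := (mul_assoc _ _ _).symm

lemma measurableSet_sum_gt (x : ℝ) : MeasurableSet {p : ℝ × ℝ | x < p.1 + p.2} :=
  measurableSet_lt measurable_const (measurable_fst.add measurable_snd)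

lemma measurableSet_min_gt_inter_sum_gt (g x : ℝ) :
    MeasurableSet ({p : ℝ × ℝ | g < min p.1 p.2} ∩ {p | x < p.1 + p.2}) :=
  (measurableSet_lt measurable_const (measurable_fst.min measurable_snd)).inter
    (measurableSet_sum_gt x)

lemma hasRaySections_sum_gt (x : ℝ) : HasRaySections {p : ℝ × ℝ | x < p.1 + p.2} :=
  fun a => Or.inr ⟨x - a, by ext b; simp [sub_lt_iff_lt_add']⟩

lemma hasRaySections_min_gt_inter_sum_gt (g x : ℝ) :
    HasRaySections ({p : ℝ × ℝ | g < min p.1 p.2} ∩ {p | x < p.1 + p.2}) := by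
  intro a
  by_cases ha : g < a
  · refine Or.inr ⟨max g (x - a), ?_⟩
    ext b
    simp [ha, sub_lt_iff_lt_add']
  · exact Or.inl (eq_empty_of_forall_notMem fun b hb => ha (lt_min_iff.1 hb.1).1)

lemma swap_preimage_sum_gt (x : ℝ) :
    Prod.swap ⁻¹' {p : ℝ × ℝ | x < p.1 + p.2} = {p | x < p.1 + p.2} := by
  ext p; simp [add_comm]

lemma swap_preimage_min_gt_inter_sum_gt (g x : ℝ) :
    Prod.swap ⁻¹' ({p : ℝ × ℝ | g < min p.1 p.2} ∩ {p | x < p.1 + p.2}) =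
      {p | g < min p.1 p.2} ∩ {p | x < p.1 + p.2} := by
  ext p; simp [add_comm, and_comm]

instance isFiniteMeasure_conv (μ ν : Measure ℝ) [IsFiniteMeasure μ] [IsFiniteMeasure ν] :
    IsFiniteMeasure (conv μ ν) := by
  unfold conv; infer_instance

lemma conv_apply_Ioi (μ ν : Measure ℝ) (t : ℝ) :
    conv μ ν (Ioi t) = (μ.prod ν) {p | t < p.1 + p.2} :=
  Measure.map_apply (measurable_fst.add measurable_snd) measurableSet_Ioi

lemma conv_Ioi_le_mul {μ ν ρ : Measure ℝ} [SFinite μ] [SFinite ν] {C : ℝ≥0∞}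
    (hC : ∀ t, ν (Ioi t) ≤ C * μ (Ioi t)) (t : ℝ) :
    conv ρ ν (Ioi t) ≤ C * conv ρ μ (Ioi t) := by
  rw [conv_apply_Ioi, conv_apply_Ioi]
  exact prod_le_mul_prod_of_measure_Ioi_le hC ρ (measurableSet_sum_gt t) (hasRaySections_sum_gt t)

lemma prod_inter_sum_gt_eq_ofReal_condPair_mul {κ : Measure ℝ} [IsFiniteMeasure κ]
    (A : Set (ℝ × ℝ)) (x : ℝ) :
    (κ.prod κ) (A ∩ {p | x < p.1 + p.2}) =
      ENNReal.ofReal (condPair κ A x) * (κ.prod κ) {p | x < p.1 + p.2} := by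
  set D := (κ.prod κ) {p : ℝ × ℝ | x < p.1 + p.2}
  have hle : (κ.prod κ) (A ∩ {p | x < p.1 + p.2}) ≤ D := measure_mono inter_subset_right
  rcases eq_or_ne D 0 with hD | hD
  · rw [hD, mul_zero]
    exact nonpos_iff_eq_zero.1 (hD ▸ hle)
  · rw [condPair, ENNReal.ofReal_div_of_pos (ENNReal.toReal_pos hD (measure_ne_top _ _)),
      ENNReal.ofReal_toReal (measure_ne_top _ _), ENNReal.ofReal_toReal (measure_ne_top _ _),
      ENNReal.div_mul_cancel hD (measure_ne_top _ _)]

lemma tendsto_condPair_of_le_mul {κ : Measure ℝ} [IsFiniteMeasure κ] {A : ℝ → Set (ℝ × ℝ)}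
    {δ : ℝ → ℝ≥0∞} (hδ : Tendsto δ atTop (𝓝 0))
    (hle : ∀ x, (κ.prod κ) (A x ∩ {p | x < p.1 + p.2}) ≤ δ x * (κ.prod κ) {p | x < p.1 + p.2}) :
    Tendsto (fun x => condPair κ (A x) x) atTop (𝓝 0) := by
  have hδR : Tendsto (fun x => (δ x).toReal) atTop (𝓝 0) := by
    simpa [Function.comp_def] using (ENNReal.tendsto_toReal ENNReal.zero_ne_top).comp hδ
  refine tendsto_of_tendsto_of_tendsto_of_le_of_le' tendsto_const_nhds hδR
    (Eventually.of_forall fun x => div_nonneg ENNReal.toReal_nonneg ENNReal.toReal_nonneg) ?_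
  filter_upwards [hδ.eventually (eventually_ne_nhds ENNReal.zero_ne_top)] with x hx
  refine div_le_of_le_mul₀ ENNReal.toReal_nonneg ENNReal.toReal_nonneg ?_
  rw [← ENNReal.toReal_mul]
  exact ENNReal.toReal_mono (ENNReal.mul_ne_top hx (measure_ne_top _ _)) (hle x)

theorem memJg_of_measure_Ioi_le_mul {κ η : Measure ℝ} [IsFiniteMeasure κ] [IsFiniteMeasure η]
    {C C' : ℝ≥0∞} (hC : C ≠ ∞) (hC' : C' ≠ ∞) (hκη : ∀ t, κ (Ioi t) ≤ C * η (Ioi t))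
    (hηκ : ∀ t, η (Ioi t) ≤ C' * κ (Ioi t)) (hη : MemJg η) : MemJg κ := by
  intro g hg0 hgm hgu
  refine tendsto_condPair_of_le_mul (δ := fun x =>
    C * C * (C' * C') * ENNReal.ofReal (condPair η {p | g x < min p.1 p.2} x)) ?_ fun x => ?_
  · simpa using ENNReal.Tendsto.const_mul (ENNReal.tendsto_ofReal (hη g hg0 hgm hgu))
      (Or.inr (by finiteness))
  · have hA := measurableSet_min_gt_inter_sum_gt (g x) x
    calc (κ.prod κ) ({p | g x < min p.1 p.2} ∩ {p | x < p.1 + p.2})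
        ≤ C * C * (η.prod η) ({p | g x < min p.1 p.2} ∩ {p | x < p.1 + p.2}) :=
          prod_self_le_mul_prod_self hκη hA (hasRaySections_min_gt_inter_sum_gt _ _)
            (swap_preimage_min_gt_inter_sum_gt _ _)
      _ = C * C * (ENNReal.ofReal (condPair η {p | g x < min p.1 p.2} x) *
            (η.prod η) {p | x < p.1 + p.2}) := by
          rw [prod_inter_sum_gt_eq_ofReal_condPair_mul]
      _ ≤ C * C * (ENNReal.ofReal (condPair η {p | g x < min p.1 p.2} x) *
            (C' * C' * (κ.prod κ) {p | x < p.1 + p.2})) := by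
          gcongr
          exact prod_self_le_mul_prod_self hηκ (measurableSet_sum_gt x)
            (hasRaySections_sum_gt x) (swap_preimage_sum_gt x)
      _ = _ := by ring

lemma measurePreserving_regroup {α β γ δ : Type*} [MeasurableSpace α] [MeasurableSpace β]
    [MeasurableSpace γ] [MeasurableSpace δ] (μa : Measure α) (μb : Measure β) (μc : Measure γ)
    (μd : Measure δ) [SFinite μa] [SFinite μb] [SFinite μc] [SFinite μd] :
    MeasurePreserving (fun P : (α × β) × (γ × δ) => ((P.1.1, P.2.1), (P.1.2, P.2.2)))
      ((μa.prod μb).prod (μc.prod μd)) ((μa.prod μc).prod (μb.prod μd)) := by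
  have e₁ := measurePreserving_prodAssoc μa μb (μc.prod μd)
  have e₂ := (MeasurePreserving.id μa).prod
    ((measurePreserving_prodAssoc μb μc μd).symm MeasurableEquiv.prodAssoc)
  have e₃ := (MeasurePreserving.id μa).prod
    ((Measure.measurePreserving_swap (μ := μb) (ν := μc)).prod (MeasurePreserving.id μd))
  have e₄ := (MeasurePreserving.id μa).prod (measurePreserving_prodAssoc μc μb μd)
  have e₅ := (measurePreserving_prodAssoc μa μc (μb.prod μd)).symm MeasurableEquiv.prodAssoc
  exact (((e₅.comp e₄).comp e₃).comp e₂).comp e₁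

lemma conv_prod_conv_apply {μ ν μ' ν' : Measure ℝ} [SFinite μ] [SFinite ν] [SFinite μ']
    [SFinite ν'] {W : Set (ℝ × ℝ)} (hW : MeasurableSet W) :
    ((conv μ ν).prod (conv μ' ν')) W = ((μ.prod ν).prod (μ'.prod ν'))
      (Prod.map (fun p : ℝ × ℝ => p.1 + p.2) (fun p : ℝ × ℝ => p.1 + p.2) ⁻¹' W) := by
  have hadd : Measurable fun p : ℝ × ℝ => p.1 + p.2 := measurable_fst.add measurable_snd
  rw [conv, conv, Measure.map_prod_map _ _ hadd hadd, Measure.map_apply (hadd.prodMap hadd) hW]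

lemma MeasureTheory.MeasurePreserving.measure_union_preimage_le {α : Type*} [MeasurableSpace α]
    {m : Measure α} {e : α → α} (he : MeasurePreserving e m m) {A : Set α}
    (hA : MeasurableSet A) : m (A ∪ e ⁻¹' A) ≤ 2 * m A :=
  calc m (A ∪ e ⁻¹' A) ≤ m A + m (e ⁻¹' A) := measure_union_le _ _
    _ = 2 * m A := by rw [he.measure_preimage hA.nullMeasurableSet, two_mul]

lemma ae_nonneg_of_measure_Iio_eq_zero {μ : Measure ℝ} (hμ : μ (Iio 0) = 0) :
    ∀ᵐ a ∂μ, 0 ≤ a :=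
  ae_iff.2 (measure_mono_null (fun _ ha => not_le.1 ha) hμ)

lemma measure_Ioi_le_prod_sum_gt {μ ν : Measure ℝ} [SFinite μ] [IsProbabilityMeasure ν]
    (hν : ν (Iio 0) = 0) (t : ℝ) : μ (Ioi t) ≤ (μ.prod ν) {p | t < p.1 + p.2} :=
  calc μ (Ioi t) = (μ.prod ν) (Ioi t ×ˢ univ) := by
        rw [Measure.prod_prod, measure_univ, mul_one]
    _ ≤ _ := measure_mono_ae <| (Measure.quasiMeasurePreserving_snd.ae
        (ae_nonneg_of_measure_Iio_eq_zero hν)).mono fun p hp hpt => by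
          have ht : t < p.1 := hpt.1
          show t < p.1 + p.2
          linarith

-- Coordinates are `((X₁, Y₁), (X₂, Y₂))`, so that `Zᵢ = Xᵢ + Yᵢ`.
lemma prod_preimage_min_gt_le_four_mul (μ : Measure ℝ) [SFinite μ] {g H x : ℝ}
    (hgH : 2 * H ≤ g) :
    ((μ.prod μ).prod (μ.prod μ)) (Prod.map (fun p : ℝ × ℝ => p.1 + p.2)
        (fun p : ℝ × ℝ => p.1 + p.2) ⁻¹' ({p | g < min p.1 p.2} ∩ {p | x < p.1 + p.2}))
      ≤ 4 * ((μ.prod μ).prod (μ.prod μ))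
        {P | H < P.1.1 ∧ H < P.2.1 ∧ x < P.1.1 + P.1.2 + (P.2.1 + P.2.2)} := by
  set Q := (μ.prod μ).prod (μ.prod μ)
  set F := {P : (ℝ × ℝ) × (ℝ × ℝ) | H < P.1.1 ∧ H < P.2.1 ∧ x < P.1.1 + P.1.2 + (P.2.1 + P.2.2)}
  set E := {P : (ℝ × ℝ) × (ℝ × ℝ) |
    H < P.1.1 ∧ (H < P.2.1 ∨ H < P.2.2) ∧ x < P.1.1 + P.1.2 + (P.2.1 + P.2.2)}
  have hswap : MeasurePreserving Prod.swap (μ.prod μ) (μ.prod μ) := Measure.measurePreserving_swap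
  have hF : MeasurableSet F := by unfold F; measurability
  have hE : MeasurableSet E := by unfold E; measurability
  have hEF : Q E ≤ 2 * Q F := by
    refine le_trans (measure_mono ?_)
      (((MeasurePreserving.id _).prod hswap).measure_union_preimage_le hF)
    rintro ⟨⟨a, b⟩, c, d⟩ ⟨ha, hc | hd, hsum⟩
    · exact Or.inl ⟨ha, hc, hsum⟩
    · refine Or.inr ⟨ha, hd, ?_⟩
      simp only [Prod.map, id, Prod.swap]
      linarith
  calc Q _ ≤ Q (E ∪ Prod.map Prod.swap id ⁻¹' E) := by
        refine measure_mono ?_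
        rintro ⟨⟨a, b⟩, c, d⟩ ⟨hmin, hsum⟩
        simp only [Prod.map, mem_ofPred_eq, lt_min_iff] at hmin hsum
        have hcd : H < c ∨ H < d := by
          by_contra! h
          linarith [hmin.2, h.1, h.2]
        by_cases ha : H < a
        · exact Or.inl ⟨ha, hcd, hsum⟩
        · refine Or.inr ⟨?_, hcd, ?_⟩ <;> simp only [Prod.map, id, Prod.swap] <;>
            linarith [not_lt.1 ha]
    _ ≤ 2 * Q E := (hswap.prod (MeasurePreserving.id _)).measure_union_preimage_le hE
    _ ≤ 2 * (2 * Q F) := by gcongr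
    _ = 4 * Q F := by rw [← mul_assoc]; norm_num

lemma prod_preimage_sum_gt_eq_lintegral (μ : Measure ℝ) [SFinite μ] (x : ℝ) :
    ((μ.prod μ).prod (μ.prod μ)) {P | x < P.1.1 + P.1.2 + (P.2.1 + P.2.2)}
      = ∫⁻ q, (μ.prod μ) {p | x - (q.1 + q.2) < p.1 + p.2} ∂(μ.prod μ) := by
  have hD : MeasurableSet {P : (ℝ × ℝ) × (ℝ × ℝ) | x < P.1.1 + P.1.2 + (P.2.1 + P.2.2)} := by
    measurability
  rw [Measure.prod_apply_symm hD]
  refine lintegral_congr fun q => ?_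
  congr 1
  ext p
  simp [sub_lt_iff_lt_add]

lemma prod_corner_eq_lintegral (μ : Measure ℝ) [SFinite μ] (H x : ℝ) :
    ((μ.prod μ).prod (μ.prod μ))
        {P | H < P.1.1 ∧ H < P.2.1 ∧ x < P.1.1 + P.1.2 + (P.2.1 + P.2.2)}
      = ∫⁻ q, (μ.prod μ) ({p | H < min p.1 p.2} ∩ {p | x - (q.1 + q.2) < p.1 + p.2})
          ∂(μ.prod μ) := by
  set G := {P : (ℝ × ℝ) × (ℝ × ℝ) | H < min P.1.1 P.1.2 ∧ x - (P.2.1 + P.2.2) < P.1.1 + P.1.2}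
  have hG : MeasurableSet G := by unfold G; measurability
  have hpre : (fun P : (ℝ × ℝ) × (ℝ × ℝ) => ((P.1.1, P.2.1), (P.1.2, P.2.2))) ⁻¹' G =
      {P | H < P.1.1 ∧ H < P.2.1 ∧ x < P.1.1 + P.1.2 + (P.2.1 + P.2.2)} := by
    ext P
    simp only [G, mem_preimage, mem_ofPred_eq, lt_min_iff, sub_lt_iff_lt_add, and_assoc]
    constructor <;> rintro ⟨h₁, h₂, h₃⟩ <;> exact ⟨h₁, h₂, by linarith⟩
  rw [← hpre, (measurePreserving_regroup μ μ μ μ).measure_preimage hG.nullMeasurableSet,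
    Measure.prod_apply_symm hG]
  rfl

lemma prod_min_gt_inter_sum_gt_le {μ : Measure ℝ} [IsFiniteMeasure μ] {H' H : ℝ} (hH : H' ≤ H)
    (t : ℝ) :
    (μ.prod μ) ({p | H < min p.1 p.2} ∩ {p | t < p.1 + p.2}) ≤
      ENNReal.ofReal (condPair μ {p | H' < min p.1 p.2} t) * (μ.prod μ) {p | t < p.1 + p.2} :=
  calc (μ.prod μ) ({p | H < min p.1 p.2} ∩ {p | t < p.1 + p.2})
      ≤ (μ.prod μ) ({p | H' < min p.1 p.2} ∩ {p | t < p.1 + p.2}) :=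
        measure_mono (inter_subset_inter_left _ fun _ hp => hH.trans_lt hp)
    _ = _ := prod_inter_sum_gt_eq_ofReal_condPair_mul _ t

lemma ae_fst_add_snd_nonneg {μ ν : Measure ℝ} [SFinite ν] (hμ : μ (Iio 0) = 0)
    (hν : ν (Iio 0) = 0) : ∀ᵐ q ∂(μ.prod ν), 0 ≤ q.1 + q.2 :=
  ((Measure.quasiMeasurePreserving_fst.ae (ae_nonneg_of_measure_Iio_eq_zero hμ)).and
    (Measure.quasiMeasurePreserving_snd.ae (ae_nonneg_of_measure_Iio_eq_zero hν))).mono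
    fun _ hq => add_nonneg hq.1 hq.2

lemma prod_corner_le {μ : Measure ℝ} [IsFiniteMeasure μ] (hμ : μ (Iio 0) = 0) {h : ℝ → ℝ}
    (hh : Monotone h) {x : ℝ} {ε : ℝ≥0∞}
    (hε : ∀ t, h x ≤ t → t ≤ x → ENNReal.ofReal (condPair μ {p | h t < min p.1 p.2} t) ≤ ε) :
    ((μ.prod μ).prod (μ.prod μ))
        {P | h x < P.1.1 ∧ h x < P.2.1 ∧ x < P.1.1 + P.1.2 + (P.2.1 + P.2.2)}
      ≤ ε * ((μ.prod μ).prod (μ.prod μ)) {P | x < P.1.1 + P.1.2 + (P.2.1 + P.2.2)} +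
        μ (Ioi (h x)) * μ (Ioi (h x)) * (μ.prod μ) {p | x - h x < p.1 + p.2} := by
  set H := h x
  set F₂ : ℝ → ℝ≥0∞ := fun t => (μ.prod μ) {p | t < p.1 + p.2}
  have hF₂anti : Antitone F₂ := fun _ _ hst => measure_mono fun _ hp => hst.trans_lt hp
  have hF₂ : Measurable fun q : ℝ × ℝ => F₂ (x - (q.1 + q.2)) :=
    hF₂anti.measurable.comp (measurable_const.sub (measurable_fst.add measurable_snd))
  have hpoint : ∀ q : ℝ × ℝ, 0 ≤ q.1 + q.2 →
      (μ.prod μ) ({p | H < min p.1 p.2} ∩ {p | x - (q.1 + q.2) < p.1 + p.2}) ≤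
        ε * F₂ (x - (q.1 + q.2)) +
          {q : ℝ × ℝ | x - H < q.1 + q.2}.indicator (fun _ => μ (Ioi H) * μ (Ioi H)) q := by
    intro q hq
    by_cases hfar : x - H < q.1 + q.2
    · rw [indicator_of_mem (show q ∈ {q : ℝ × ℝ | x - H < q.1 + q.2} from hfar),
        ← Measure.prod_prod]
      exact le_add_left (measure_mono fun p hp => lt_min_iff.1 (show H < min p.1 p.2 from hp.1))
    · calc _ ≤ ENNReal.ofReal (condPair μ {p | h (x - (q.1 + q.2)) < min p.1 p.2}
              (x - (q.1 + q.2))) * F₂ (x - (q.1 + q.2)) :=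
            prod_min_gt_inter_sum_gt_le (hh (by linarith)) _
        _ ≤ ε * F₂ (x - (q.1 + q.2)) := by gcongr; exact hε _ (by linarith) (by linarith)
        _ ≤ _ := le_self_add
  calc ((μ.prod μ).prod (μ.prod μ))
        {P | H < P.1.1 ∧ H < P.2.1 ∧ x < P.1.1 + P.1.2 + (P.2.1 + P.2.2)}
      = ∫⁻ q, (μ.prod μ) ({p | H < min p.1 p.2} ∩ {p | x - (q.1 + q.2) < p.1 + p.2})
          ∂(μ.prod μ) := prod_corner_eq_lintegral μ H x
    _ ≤ ∫⁻ q, (ε * F₂ (x - (q.1 + q.2)) +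
          {q : ℝ × ℝ | x - H < q.1 + q.2}.indicator (fun _ => μ (Ioi H) * μ (Ioi H)) q)
          ∂(μ.prod μ) := lintegral_mono_ae ((ae_fst_add_snd_nonneg hμ hμ).mono hpoint)
    _ = _ := by
        rw [lintegral_add_left (hF₂.const_mul _), lintegral_const_mul _ hF₂,
          lintegral_indicator_const (measurableSet_sum_gt _), prod_preimage_sum_gt_eq_lintegral]

lemma measure_Ioi_mul_prod_sum_gt_le {μ : Measure ℝ} [IsProbabilityMeasure μ]
    (hμ : μ (Iio 0) = 0) (H x : ℝ) :
    μ (Ioi H) * (μ.prod μ) {p | x - H < p.1 + p.2} ≤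
      ((μ.prod μ).prod (μ.prod μ)) {P | x < P.1.1 + P.1.2 + (P.2.1 + P.2.2)} :=
  calc μ (Ioi H) * (μ.prod μ) {p | x - H < p.1 + p.2}
      ≤ (μ.prod μ) {p | H < p.1 + p.2} * (μ.prod μ) {p | x - H < p.1 + p.2} := by
        gcongr; exact measure_Ioi_le_prod_sum_gt hμ H
    _ = ((μ.prod μ).prod (μ.prod μ))
          ({p | H < p.1 + p.2} ×ˢ {p | x - H < p.1 + p.2}) := (Measure.prod_prod _ _).symm
    _ ≤ _ := measure_mono fun P hP => by
        have h₁ : H < P.1.1 + P.1.2 := hP.1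
        have h₂ : x - H < P.2.1 + P.2.2 := hP.2
        show x < P.1.1 + P.1.2 + (P.2.1 + P.2.2)
        linarith

lemma conv_self_prod_min_gt_le {μ : Measure ℝ} [IsProbabilityMeasure μ] (hμ : μ (Iio 0) = 0)
    {h : ℝ → ℝ} (hh : Monotone h) {g x : ℝ} (hg : 2 * h x ≤ g) {ε : ℝ≥0∞}
    (hε : ∀ t, h x ≤ t → t ≤ x → ENNReal.ofReal (condPair μ {p | h t < min p.1 p.2} t) ≤ ε) :
    ((conv μ μ).prod (conv μ μ)) ({p | g < min p.1 p.2} ∩ {p | x < p.1 + p.2}) ≤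
      4 * (ε + μ (Ioi (h x))) * ((conv μ μ).prod (conv μ μ)) {p | x < p.1 + p.2} := by
  rw [conv_prod_conv_apply (measurableSet_min_gt_inter_sum_gt g x),
    conv_prod_conv_apply (measurableSet_sum_gt x)]
  set D := ((μ.prod μ).prod (μ.prod μ)) {P | x < P.1.1 + P.1.2 + (P.2.1 + P.2.2)}
  calc _ ≤ 4 * ((μ.prod μ).prod (μ.prod μ))
          {P | h x < P.1.1 ∧ h x < P.2.1 ∧ x < P.1.1 + P.1.2 + (P.2.1 + P.2.2)} :=
        prod_preimage_min_gt_le_four_mul μ hg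
    _ ≤ 4 * (ε * D + μ (Ioi (h x)) * (μ (Ioi (h x)) * (μ.prod μ) {p | x - h x < p.1 + p.2})) := by
        rw [← mul_assoc]; gcongr; exact prod_corner_le hμ hh hε
    _ ≤ 4 * (ε * D + μ (Ioi (h x)) * D) := by
        gcongr; exact measure_Ioi_mul_prod_sum_gt_le hμ (h x) x
    _ = 4 * (ε + μ (Ioi (h x))) * D := by ring

theorem memJg_conv_self {μ : Measure ℝ} [IsProbabilityMeasure μ] (hμ : μ (Iio 0) = 0)
    (hJ : MemJg μ) : MemJg (conv μ μ) := by
  intro g hg0 hgm hgu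
  set h : ℝ → ℝ := fun x => g x / 2
  have hh0 : ∀ x, 0 ≤ h x := fun x => div_nonneg (hg0 x) zero_le_two
  have hhm : Monotone h := fun a b hab => div_le_div_of_nonneg_right (hgm hab) zero_le_two
  have hhu : ∀ M, ∃ x, M < h x := fun M =>
    (hgu (2 * M)).imp fun x hx => by simp only [h]; linarith
  have hhtop : Tendsto h atTop atTop :=
    tendsto_atTop_atTop_of_monotone hhm fun b => (hhu b).imp fun _ => le_of_lt
  set ε : ℝ → ℝ≥0∞ := fun T => ⨆ t ∈ Ici T, ENNReal.ofReal (condPair μ {p | h t < min p.1 p.2} t)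
  refine tendsto_condPair_of_le_mul (δ := fun x => 4 * (ε (h x) + μ (Ioi (h x)))) ?_ fun x =>
    conv_self_prod_min_gt_le hμ hhm (by simp only [h]; linarith) fun t ht _ =>
      le_biSup (fun t => ENNReal.ofReal (condPair μ {p | h t < min p.1 p.2} t)) (mem_Ici.2 ht)
  have hε := tendsto_biSup_Ici_of_tendsto_zero
    (ENNReal.ofReal_zero ▸ ENNReal.tendsto_ofReal (hJ h hh0 hhm hhu))
  have hδ := ENNReal.Tendsto.const_mul (a := 4)
    ((hε.add (tendsto_measure_Ioi_atTop μ)).comp hhtop) (Or.inr ENNReal.ofNat_ne_top)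
  rw [add_zero, mul_zero] at hδ
  exact hδ

theorem stmt12_general (μ ν : Measure ℝ) [IsProbabilityMeasure μ] [IsProbabilityMeasure ν]
    (hμnn : μ (Set.Iio 0) = 0) (hμub : ∀ x : ℝ, 0 < μ (Set.Ioi x))
    (hνub : ∀ x : ℝ, 0 < ν (Set.Ioi x))
    (hJ : MemJg μ) (heq : WeakTailEquiv ν μ) :
    MemJg (conv μ ν) := by
  obtain ⟨⟨c, hc, hlower⟩, ⟨C, hupper⟩⟩ := heq
  obtain ⟨C₁, hC₁, hνμ⟩ := exists_measure_Ioi_le_mul hμub hupper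
  obtain ⟨C₂, hC₂, hμν⟩ := exists_measure_Ioi_le_mul hνub
    (hlower.mono fun x hx => (le_inv_mul_iff₀ hc).2 hx)
  exact memJg_of_measure_Ioi_le_mul hC₁ hC₂ (conv_Ioi_le_mul hνμ) (conv_Ioi_le_mul hμν)
    (memJg_conv_self hμnn hJ)

theorem stmt12 (μ ν : Measure ℝ) [IsProbabilityMeasure μ] [IsProbabilityMeasure ν]
    (hμnn : μ (Set.Iio 0) = 0) (hμub : ∀ x : ℝ, 0 < μ (Set.Ioi x))
    (hνnn : ν (Set.Iio 0) = 0) (hνub : ∀ x : ℝ, 0 < ν (Set.Ioi x))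
    (hJ : MemJg μ) (heq : WeakTailEquiv ν μ) :
    MemJg (conv μ ν) :=
  stmt12_general μ ν hμnn hμub hνub hJ heq
end
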